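/- arXiv:1309.7730 — 3 statements merged into one kernel-verified Lean document; each statement's English description precedes it below -/
import Mathlib

section
/- For all integers a, m, l with 1 ≤ a, m ≤ l, the coefficients c_{a,m}^{(l)} = Σ_{h=1}^{a} (−1)^{h−1}·C(m−1,h−1)·C(l−m,a−h) satisfy the orthogonality/inversion relation: Σ_{a+b=r+1, a,b≥1} c_{m,a}^{(r)}·c_{a,m'}^{(r)} = 2^{r−1}·δ_{m,m'} for 1 ≤ m, m' ≤ r, where δ is the Kronecker delta. -/
/-- `c_{a,m}^{(l)} = Σ_{h=1}^{a} (−1)^{h−1}·C(m−1,h−1)·C(l−m,a−h)`, where `C(n,k)`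
is the binomial coefficient (equal to `0` when `k > n`). -/
def cCoeff (a m l : ℕ) : ℤ :=
  ∑ h ∈ Finset.Icc 1 a,
    (-1) ^ (h - 1) * (Nat.choose (m - 1) (h - 1) : ℤ) * (Nat.choose (l - m) (a - h) : ℤ)

/-!
The coefficients `cCoeff a m r`, `1 ≤ a ≤ r`, are those of `P_m = (1 - x)^(m-1) (1 + x)^(r-m)`.
The substitution `p ↦ (1 + x)^(r-1) p((1 - x)/(1 + x))`, realised without division by evaluating
the degree `r - 1` homogenization of `p` at `(1 - x, 1 + x)`, sends `x^(a-1)` to `P_a` and `P_m`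
to `(2x)^(m-1) 2^(r-m) = 2^(r-1) x^(m-1)`. Applied to `P_m' = ∑ a, c_{a,m'} x^(a-1)` it gives
`∑ a, c_{a,m'} P_a = 2^(r-1) x^(m'-1)`, and comparing coefficients of `x^(m-1)` is the claim.
-/

open Polynomial Finset

namespace Polynomial

lemma homogenize_pow {R : Type*} [CommSemiring R] (p : R[X]) {n : ℕ} (hp : p.natDegree ≤ n)
    (k : ℕ) : homogenize (p ^ k) (k * n) = homogenize p n ^ k := by
  simpa using homogenize_finsetProd (s := range k) (p := fun _ ↦ p) (n := fun _ ↦ n) fun _ _ ↦ hp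

lemma aeval_homogenize {R A : Type*} [CommSemiring R] [CommSemiring A] [Algebra R A]
    (p : R[X]) (n : ℕ) (x : Fin 2 → A) :
    MvPolynomial.aeval x (homogenize p n)
      = ∑ k ∈ range (n + 1), p.coeff k • (x 0 ^ k * x 1 ^ (n - k)) := by
  simp [homogenize, MvPolynomial.aeval_monomial, Nat.sum_antidiagonal_eq_sum_range_succ_mk,
    Algebra.smul_def]

lemma coeff_one_sub_X_pow {R : Type*} [CommRing R] (n k : ℕ) :
    ((1 - X : R[X]) ^ n).coeff k = n.choose k * (-1) ^ k := by
  have : (1 - X : R[X]) ^ n = ((1 + X) ^ n).comp (C (-1) * X) := by simp [sub_eq_add_neg]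
  rw [this, comp_C_mul_X_coeff, coeff_one_add_X_pow]

end Polynomial

noncomputable def cPoly (m l : ℕ) : ℤ[X] := (1 - X) ^ (m - 1) * (1 + X) ^ (l - m)

lemma coeff_cPoly (m l k : ℕ) : (cPoly m l).coeff k = cCoeff (k + 1) m l := by
  rw [cPoly, coeff_mul, Nat.sum_antidiagonal_eq_sum_range_succ_mk, cCoeff, range_eq_Ico,
    Nat.succ_eq_add_one, ← Ico_add_one_right_eq_Icc, ← sum_Ico_add' _ 0 (k + 1) 1]
  refine sum_congr rfl fun i _ ↦ ?_
  rw [coeff_one_sub_X_pow, coeff_one_add_X_pow, Nat.add_sub_cancel,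
    show k + 1 - (i + 1) = k - i by omega]
  ring

lemma homogenize_cPoly (m l : ℕ) :
    homogenize (cPoly m l) (m - 1 + (l - m))
      = (.X 1 - .X 0) ^ (m - 1) * (.X 1 + .X 0) ^ (l - m) := by
  have h_sub : (1 - X : ℤ[X]).natDegree ≤ 1 := by compute_degree
  have h_add : (1 + X : ℤ[X]).natDegree ≤ 1 := by compute_degree
  calc homogenize (cPoly m l) (m - 1 + (l - m))
      = homogenize ((1 - X) ^ (m - 1)) ((m - 1) * 1)
          * homogenize ((1 + X) ^ (l - m)) ((l - m) * 1) := by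
        rw [← homogenize_mul _ _ (natDegree_pow_le_of_le _ h_sub) (natDegree_pow_le_of_le _ h_add),
          mul_one, mul_one, cPoly]
    _ = _ := by
        rw [homogenize_pow _ h_sub, homogenize_pow _ h_add]
        simp

lemma sum_cCoeff_smul_cPoly {m l : ℕ} (hm : 1 ≤ m) (hml : m ≤ l) :
    ∑ k ∈ range l, cCoeff (k + 1) m l • cPoly (k + 1) l = C (2 ^ (l - 1)) * X ^ (m - 1) := by
  obtain ⟨n, rfl⟩ : ∃ n, l = n + 1 := ⟨l - 1, by omega⟩
  have h := congrArg (MvPolynomial.aeval ![(1 - X : ℤ[X]), 1 + X]) (homogenize_cPoly m (n + 1))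
  rw [show m - 1 + (n + 1 - m) = n by omega, aeval_homogenize] at h
  simp only [coeff_cPoly, Matrix.cons_val_zero, Matrix.cons_val_one, map_mul, map_pow, map_sub,
    map_add, MvPolynomial.aeval_X] at h
  calc ∑ k ∈ range (n + 1), cCoeff (k + 1) m (n + 1) • cPoly (k + 1) (n + 1)
      = (1 + X - (1 - X)) ^ (m - 1) * (1 + X + (1 - X)) ^ (n + 1 - m) := by
        rw [← h]
        refine sum_congr rfl fun k _ ↦ ?_
        rw [cPoly, Nat.add_sub_cancel, Nat.add_sub_add_right]
    _ = C (2 ^ (n + 1 - 1)) * X ^ (m - 1) := by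
        have h_diff : (1 + X - (1 - X) : ℤ[X]) = C 2 * X := by rw [C_ofNat]; ring
        have h_sum : (1 + X + (1 - X) : ℤ[X]) = C 2 := by rw [C_ofNat]; ring
        rw [h_diff, h_sum, mul_pow, ← C_pow, ← C_pow, mul_right_comm, ← C_mul, ← pow_add,
          Nat.add_sub_cancel, show m - 1 + (n + 1 - m) = n by omega]

theorem cCoeff_orthogonality_general (r m m' : ℕ) (hm1 : 1 ≤ m)
    (hm'1 : 1 ≤ m') (hm'r : m' ≤ r) :
    ∑ a ∈ Finset.Icc 1 r, cCoeff m a r * cCoeff a m' r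
      = if m = m' then 2 ^ (r - 1) else 0 := by
  obtain ⟨i, rfl⟩ : ∃ i, m = i + 1 := ⟨m - 1, by omega⟩
  calc ∑ a ∈ Icc 1 r, cCoeff (i + 1) a r * cCoeff a m' r
      = ∑ k ∈ range r, cCoeff (k + 1) m' r * (cPoly (k + 1) r).coeff i := by
        rw [← Ico_add_one_right_eq_Icc, sum_Ico_eq_sum_range, Nat.add_sub_cancel]
        refine sum_congr rfl fun k _ ↦ ?_
        rw [coeff_cPoly, add_comm 1 k, mul_comm]
    _ = (C (2 ^ (r - 1)) * X ^ (m' - 1) : ℤ[X]).coeff i := by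
        rw [← sum_cCoeff_smul_cPoly hm'1 hm'r, finsetSum_coeff]
        simp only [coeff_smul, smul_eq_mul]
    _ = if i + 1 = m' then 2 ^ (r - 1) else 0 := by
        rw [coeff_C_mul_X_pow]
        exact if_congr (by omega) rfl rfl

/-- Orthogonality/inversion relation:
`Σ_{a+b=r+1, a,b≥1} c_{m,a}^{(r)}·c_{a,m'}^{(r)} = 2^{r−1}·δ_{m,m'}` for `1 ≤ m, m' ≤ r`. -/
theorem cCoeff_orthogonality (r m m' : ℕ) (hm1 : 1 ≤ m) (hmr : m ≤ r)
    (hm'1 : 1 ≤ m') (hm'r : m' ≤ r) :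
    ∑ a ∈ Finset.Icc 1 r, cCoeff m a r * cCoeff a m' r
      = if m = m' then 2 ^ (r - 1) else 0 :=
  cCoeff_orthogonality_general r m m' hm1 hm'1 hm'r
end

section
/- Let y > 0 and τ = 1/2 + y·i. Then the absolutely convergent lattice sum Σ over odd m and all n ∈ ℤ of (−1)ⁿ·m² / |mτ + n|⁶ equals 0. -/
/-!
The map `(m, n) ↦ (m, -n - m)` is an involution of `ℤ × ℤ` preserving `m`. Since `re τ = 1/2`
we have `conj τ = 1 - τ`, so it sends `mτ + n` to `-conj (mτ + n)`, which has the same absolute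
value; for odd `m` it flips the parity of `n` and hence the sign `(-1)ⁿ`. The summand is therefore
odd under a bijection of the index set, and its sum vanishes.
-/

theorem tsum_eq_zero_of_comp_eq_neg {α β : Type*} [AddCommGroup α] [TopologicalSpace α]
    [IsTopologicalAddGroup α] [T2Space α] [IsAddTorsionFree α] (e : β ≃ β) {f : β → α}
    (hf : ∀ b, f (e b) = -f b) : ∑' b, f b = 0 := by
  have h := e.tsum_eq f
  rw [tsum_congr hf, tsum_neg] at h
  exact neg_eq_self.mp h

def negShift : Equiv.Perm (ℤ × ℤ) :=
  Function.Involutive.toPerm (fun p => (p.1, -p.2 - p.1)) fun p => by simp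

@[simp]
theorem negShift_apply (m n : ℤ) : negShift (m, n) = (m, -n - m) := rfl

theorem neg_one_zpow_neg_sub {m : ℤ} (hm : Odd m) (n : ℤ) :
    (-1 : ℝ) ^ (-n - m) = -(-1 : ℝ) ^ n := by
  rw [zpow_sub₀ (by norm_num), zpow_neg, hm.neg_one_zpow]
  rcases Int.even_or_odd n with hn | hn <;> simp [hn.neg_one_zpow]

theorem norm_mul_add_neg_sub {τ : ℂ} (hτ : τ.re = 1 / 2) (m n : ℤ) :
    ‖(m : ℂ) * τ + ((-n - m : ℤ) : ℂ)‖ = ‖(m : ℂ) * τ + n‖ := by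
  have h : (m : ℂ) * τ + ((-n - m : ℤ) : ℂ) = -(starRingEnd ℂ) ((m : ℂ) * τ + n) := by
    apply Complex.ext <;> simp [hτ]; ring
  rw [h, norm_neg, Complex.norm_conj]

theorem lattice_sum_odd_m_sq_general (y : ℝ) :
    (∑' p : ℤ × ℤ,
      if Odd p.1 then
        ((-1 : ℝ) ^ p.2 * (p.1 : ℝ) ^ 2)
          / ‖(p.1 : ℂ) * ((1 / 2 : ℂ) + (y : ℂ) * Complex.I) + (p.2 : ℂ)‖ ^ 6
      else 0) = 0 := by
  refine tsum_eq_zero_of_comp_eq_neg negShift fun ⟨m, n⟩ => ?_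
  have hre : ((1 / 2 : ℂ) + (y : ℂ) * Complex.I).re = 1 / 2 := by simp
  by_cases hm : Odd m
  · simp only [negShift_apply, if_pos hm, norm_mul_add_neg_sub hre, neg_one_zpow_neg_sub hm,
      neg_mul, neg_div]
  · simp [hm]

/-- For `τ = 1/2 + y·i` with `y > 0`, the lattice sum
`Σ_{m odd, n ∈ ℤ} (−1)ⁿ·m²/|mτ+n|⁶` vanishes. -/
theorem lattice_sum_odd_m_sq (y : ℝ) (hy : 0 < y) :
    (∑' p : ℤ × ℤ,
      if Odd p.1 then
        ((-1 : ℝ) ^ p.2 * (p.1 : ℝ) ^ 2)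
          / ‖(p.1 : ℂ) * ((1 / 2 : ℂ) + (y : ℂ) * Complex.I) + (p.2 : ℂ)‖ ^ 6
      else 0) = 0 :=
  lattice_sum_odd_m_sq_general y
end

section
/- For α ≥ β > 0, the arithmetic-geometric mean satisfies AGM(α, β) = α / ₂F₁(1/2, 1/2; 1; 1 − (β/α)²), where ₂F₁ is the Gauss hypergeometric function. -/
/-!
The integral `I(a, b) = ∫₀^∞ dt / √((t² + a²)(t² + b²))` is invariant under the AGM step
`(a, b) ↦ ((a + b)/2, √(ab))`: Newman's substitution `t ↦ (t - ab/t)/2` maps `(0, ∞)` onto `ℝ`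
and carries one integrand to twice the other. The substitution `t = b tan θ` turns `I(a, b)` into
`a⁻¹ ∫₀^{π/2} dθ / √(1 - m sin²θ)` with `m = 1 - (b/a)²`; expanding by the binomial series and
integrating termwise with Wallis' formula gives `I(a, b) = π/(2a) · ₂F₁(1/2, 1/2; 1; m)`.
Since `1 ≤ ₂F₁(1/2, 1/2; 1; m) ≤ (1 - m)^(-1/2)`, this squeezes `I(a, b)` between `π/(2a)` and
`π/(2b)` when `b ≤ a`; along the AGM sequence both bounds tend to `π/(2L)`, so `I(α, β) = π/(2L)`.
-/

open Filter

/-- The AGM iteration: `a₀ = α, b₀ = β`, `a_{n+1} = (aₙ+bₙ)/2`, `b_{n+1} = √(aₙbₙ)`. -/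
noncomputable def agmSeq (α β : ℝ) : ℕ → ℝ × ℝ
  | 0 => (α, β)
  | (n + 1) =>
      (((agmSeq α β n).1 + (agmSeq α β n).2) / 2,
        Real.sqrt ((agmSeq α β n).1 * (agmSeq α β n).2))

/-- The Gauss hypergeometric series `₂F₁(a,b;c;x) = Σ_{n≥0} (a)ₙ(b)ₙ/((c)ₙ·n!)·xⁿ`. -/
noncomputable def hyp2F1 (a b c x : ℝ) : ℝ :=
  ∑' n : ℕ, ((ascPochhammer ℝ n).eval a * (ascPochhammer ℝ n).eval b)
    / ((ascPochhammer ℝ n).eval c * (Nat.factorial n : ℝ)) * x ^ n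

open Real Set MeasureTheory

noncomputable def wallisCoeff (n : ℕ) : ℝ := ∏ i ∈ Finset.range n, (2 * (i : ℝ) + 1) / (2 * i + 2)

lemma wallisCoeff_succ (n : ℕ) :
    wallisCoeff (n + 1) = wallisCoeff n * ((2 * n + 1) / (2 * n + 2)) :=
  Finset.prod_range_succ _ _

lemma wallisCoeff_nonneg (n : ℕ) : 0 ≤ wallisCoeff n :=
  Finset.prod_nonneg fun _ _ => by positivity

lemma wallisCoeff_le_one (n : ℕ) : wallisCoeff n ≤ 1 :=
  Finset.prod_le_one (fun _ _ => by positivity) fun _ _ =>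
    div_le_one_of_le₀ (by linarith) (by positivity)

lemma ascPochhammer_eval_half (n : ℕ) :
    (ascPochhammer ℝ n).eval (1 / 2) = n.factorial * wallisCoeff n := by
  induction n with
  | zero => simp [wallisCoeff]
  | succ n ih =>
    rw [ascPochhammer_succ_eval, ih, wallisCoeff_succ, Nat.factorial_succ]
    push_cast
    field_simp
    ring

lemma ringChoose_eq_wallisCoeff (n : ℕ) :
    Ring.choose ((1 / 2 : ℝ) + n - 1) n = wallisCoeff n := by
  rw [Ring.choose_eq_smul, Polynomial.descPochhammer_smeval_eq_ascPochhammer,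
    Polynomial.ascPochhammer_smeval_eq_eval, show (1 / 2 : ℝ) + n - 1 - n + 1 = 1 / 2 by ring,
    ascPochhammer_eval_half, smul_eq_mul, inv_mul_cancel_left₀ (by positivity)]

lemma hasSum_wallisCoeff_mul_pow {x : ℝ} (hx : |x| < 1) :
    HasSum (fun n => wallisCoeff n * x ^ n) (1 / √(1 - x)) := by
  have h := (one_div_one_sub_rpow_hasFPowerSeriesOnBall_zero (1 / 2)).hasSum
    (y := x) (by simpa [enorm_eq_nnnorm, ← NNReal.coe_lt_coe] using hx)
  simp only [FormalMultilinearSeries.ofScalars_apply_eq, ringChoose_eq_wallisCoeff, smul_eq_mul,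
    zero_add, ← sqrt_eq_rpow] at h
  simpa only [mul_comm] using h

lemma integral_sin_pow_even_zero_pi_div_two (n : ℕ) :
    ∫ θ in 0..π / 2, sin θ ^ (2 * n) = π / 2 * wallisCoeff n := by
  have hsymm : ∫ θ in π / 2..π, sin θ ^ (2 * n) = ∫ θ in 0..π / 2, sin θ ^ (2 * n) := by
    simpa [sin_pi_sub, show π - π / 2 = π / 2 by ring] using
      (intervalIntegral.integral_comp_sub_left (fun θ => sin θ ^ (2 * n)) π
        (a := 0) (b := π / 2)).symm
  have hint (a b : ℝ) : IntervalIntegrable (fun θ => sin θ ^ (2 * n)) volume a b :=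
    (continuous_sin.pow (2 * n)).intervalIntegrable a b
  have hsplit := intervalIntegral.integral_add_adjacent_intervals (hint 0 (π / 2)) (hint (π / 2) π)
  rw [hsymm, integral_sin_pow_even] at hsplit
  rw [wallisCoeff]
  linarith

lemma hyp2F1_half_half_one (x : ℝ) :
    hyp2F1 (1 / 2) (1 / 2) 1 x = ∑' n, wallisCoeff n ^ 2 * x ^ n := by
  refine tsum_congr fun n => ?_
  rw [ascPochhammer_eval_half, ascPochhammer_eval_one]
  field_simp

lemma hyp2F1_half_half_one_mem_Icc {x : ℝ} (hx0 : 0 ≤ x) (hx1 : x < 1) :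
    hyp2F1 (1 / 2) (1 / 2) 1 x ∈ Icc 1 (1 / √(1 - x)) := by
  have hs := hasSum_wallisCoeff_mul_pow (abs_lt.mpr ⟨by linarith, hx1⟩)
  have hle (n : ℕ) : wallisCoeff n ^ 2 * x ^ n ≤ wallisCoeff n * x ^ n := by
    gcongr
    exact pow_le_of_le_one (wallisCoeff_nonneg n) (wallisCoeff_le_one n) two_ne_zero
  have hnonneg (n : ℕ) : 0 ≤ wallisCoeff n ^ 2 * x ^ n := by positivity
  have hsumm : Summable fun n => wallisCoeff n ^ 2 * x ^ n :=
    hs.summable.of_nonneg_of_le hnonneg hle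
  rw [hyp2F1_half_half_one]
  constructor
  · simpa [wallisCoeff] using hsumm.le_tsum 0 fun n _ => hnonneg n
  · exact hs.tsum_eq ▸ hsumm.tsum_le_tsum hle hs.summable

lemma integral_inv_sqrt_one_sub_mul_sin_sq {m : ℝ} (hm : |m| < 1) :
    ∫ θ in 0..π / 2, 1 / √(1 - m * sin θ ^ 2) = π / 2 * hyp2F1 (1 / 2) (1 / 2) 1 m := by
  have hsin (θ : ℝ) : |sin θ ^ 2| ≤ 1 := by
    rw [abs_of_nonneg (sq_nonneg _)]
    exact sin_sq_le_one θ
  have hbound (n : ℕ) (θ : ℝ) : ‖wallisCoeff n * (m * sin θ ^ 2) ^ n‖ ≤ |m| ^ n := by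
    rw [norm_mul, norm_pow, Real.norm_eq_abs, Real.norm_eq_abs, abs_mul,
      abs_of_nonneg (wallisCoeff_nonneg n)]
    calc wallisCoeff n * (|m| * |sin θ ^ 2|) ^ n ≤ 1 * (|m| * 1) ^ n := by
          gcongr
          · exact wallisCoeff_le_one n
          · exact hsin θ
      _ = |m| ^ n := by ring
  have hsum := intervalIntegral.hasSum_integral_of_dominated_convergence (μ := volume)
    (a := 0) (b := π / 2) (fun n _ => |m| ^ n)
    (fun n => by fun_prop) (fun n => ae_of_all _ fun θ _ => hbound n θ)
    (ae_of_all _ fun _ _ => summable_geometric_of_lt_one (abs_nonneg m) hm)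
    intervalIntegrable_const
    (ae_of_all _ fun θ _ => hasSum_wallisCoeff_mul_pow
      ((abs_mul m _).trans_lt (by nlinarith [hsin θ, abs_nonneg m, abs_nonneg (sin θ ^ 2)])))
  have hterm (n : ℕ) : ∫ θ in 0..π / 2, wallisCoeff n * (m * sin θ ^ 2) ^ n
      = π / 2 * (wallisCoeff n ^ 2 * m ^ n) := by
    simp_rw [mul_pow, ← pow_mul, ← mul_assoc]
    rw [intervalIntegral.integral_const_mul, integral_sin_pow_even_zero_pi_div_two]
    ring
  simp only [hterm] at hsum
  rw [← hsum.tsum_eq, tsum_mul_left, hyp2F1_half_half_one]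

lemma image_tan_Ioo_zero_pi_div_two : tan '' Ioo 0 (π / 2) = Ioi 0 := by
  refine Set.eq_of_subset_of_subset ?_ fun y hy => ?_
  · rintro _ ⟨θ, hθ, rfl⟩
    exact tan_pos_of_pos_of_lt_pi_div_two hθ.1 hθ.2
  · exact ⟨arctan y, ⟨arctan_zero ▸ arctan_strictMono hy, arctan_lt_pi_div_two y⟩, tan_arctan y⟩

lemma image_sub_div_Ioi {c : ℝ} (hc : 0 < c) : (fun t => (t - c / t) / 2) '' Ioi 0 = univ := by
  refine eq_univ_of_forall fun u => ?_
  have habs : |u| < √(u ^ 2 + c) := by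
    rw [← sqrt_sq_eq_abs]
    exact sqrt_lt_sqrt (sq_nonneg u) (by linarith)
  have hpos : 0 < u + √(u ^ 2 + c) := by linarith [neg_abs_le u]
  refine ⟨u + √(u ^ 2 + c), hpos, ?_⟩
  have hs : √(u ^ 2 + c) ^ 2 = u ^ 2 + c := sq_sqrt (by positivity)
  field_simp
  linear_combination hs

lemma strictMonoOn_sub_div {c : ℝ} (hc : 0 ≤ c) :
    StrictMonoOn (fun t => (t - c / t) / 2) (Ioi 0) := fun x hx y _ hxy => by
  have : c / y ≤ c / x := div_le_div_of_nonneg_left hc hx hxy.le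
  simp only
  linarith

lemma hasDerivAt_sub_div (c : ℝ) {t : ℝ} (ht : t ≠ 0) :
    HasDerivAt (fun s => (s - c / s) / 2) ((1 + c / t ^ 2) / 2) t := by
  have h : HasDerivAt (fun s => (s - c / s) / 2) ((1 - (0 * t - c * 1) / t ^ 2) / 2) t :=
    ((hasDerivAt_id' t).sub ((hasDerivAt_const t c).div (hasDerivAt_id' t) ht)).div_const 2
  exact h.congr_deriv (by ring)

noncomputable def agmIntegrand (a b t : ℝ) : ℝ := 1 / √((t ^ 2 + a ^ 2) * (t ^ 2 + b ^ 2))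

noncomputable def agmIntegral (a b : ℝ) : ℝ := ∫ t in Ioi 0, agmIntegrand a b t

section AgmIntegral

variable {a b : ℝ}

lemma integral_agmIntegrand : ∫ t, agmIntegrand a b t = 2 * agmIntegral a b := by
  simp only [agmIntegral, ← integral_comp_abs, agmIntegrand, sq_abs]

lemma agmIntegrand_mul_tan {θ : ℝ} (hb : 0 < b) (hθ : θ ∈ Ioo 0 (π / 2)) :
    b / cos θ ^ 2 * agmIntegrand a b (b * tan θ)
      = 1 / √(a ^ 2 * cos θ ^ 2 + b ^ 2 * sin θ ^ 2) := by
  have hcos : 0 < cos θ := cos_pos_of_mem_Ioo ⟨by linarith [hθ.1, pi_div_two_pos], hθ.2⟩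
  have hc : 0 < b / cos θ ^ 2 := by positivity
  have key : ((b * tan θ) ^ 2 + a ^ 2) * ((b * tan θ) ^ 2 + b ^ 2)
      = (a ^ 2 * cos θ ^ 2 + b ^ 2 * sin θ ^ 2) * (b / cos θ ^ 2) ^ 2 := by
    rw [tan_eq_sin_div_cos]
    field_simp
    linear_combination (b ^ 2 * sin θ ^ 2 + a ^ 2 * cos θ ^ 2) * sin_sq_add_cos_sq θ
  rw [agmIntegrand, key, sqrt_mul (by positivity), sqrt_sq hc.le]
  field_simp

lemma agmIntegral_eq_integral_cos_sin (hb : 0 < b) :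
    agmIntegral a b = ∫ θ in 0..π / 2, 1 / √(a ^ 2 * cos θ ^ 2 + b ^ 2 * sin θ ^ 2) := by
  have hcos : ∀ θ ∈ Ioo (0 : ℝ) (π / 2), cos θ ≠ 0 := fun θ hθ =>
    (cos_pos_of_mem_Ioo ⟨by linarith [hθ.1, pi_div_two_pos], hθ.2⟩).ne'
  have himage : (fun θ => b * tan θ) '' Ioo 0 (π / 2) = Ioi 0 := by
    rw [← image_image (b * ·) tan, image_tan_Ioo_zero_pi_div_two, image_mul_left_Ioi hb, mul_zero]
  have hderiv : ∀ θ ∈ Ioo (0 : ℝ) (π / 2),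
      HasDerivWithinAt (fun θ => b * tan θ) (b / cos θ ^ 2) (Ioo 0 (π / 2)) θ := fun θ hθ => by
    simpa [div_eq_mul_inv] using ((hasDerivAt_tan (hcos θ hθ)).const_mul b).hasDerivWithinAt
  have hinj : InjOn (fun θ => b * tan θ) (Ioo 0 (π / 2)) := fun x hx y hy hxy =>
    injOn_tan ⟨by linarith [hx.1, pi_div_two_pos], hx.2⟩ ⟨by linarith [hy.1, pi_div_two_pos], hy.2⟩
      (mul_left_cancel₀ hb.ne' hxy)
  rw [agmIntegral, ← himage,
    integral_image_eq_integral_abs_deriv_smul measurableSet_Ioo hderiv hinj,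
    intervalIntegral.integral_of_le pi_div_two_pos.le, integral_Ioc_eq_integral_Ioo]
  refine setIntegral_congr_fun measurableSet_Ioo fun θ hθ => ?_
  rw [abs_of_pos (by have := hcos θ hθ; positivity), smul_eq_mul, agmIntegrand_mul_tan hb hθ]

lemma agmIntegrand_agm_step {t : ℝ} (ha : 0 < a) (hb : 0 < b) (ht : 0 < t) :
    (1 + a * b / t ^ 2) / 2 * agmIntegrand ((a + b) / 2) √(a * b) ((t - a * b / t) / 2)
      = 2 * agmIntegrand a b t := by
  have hc : 0 < (t ^ 2 + a * b) / (4 * t ^ 2) := by positivity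
  have key : (((t - a * b / t) / 2) ^ 2 + ((a + b) / 2) ^ 2)
        * (((t - a * b / t) / 2) ^ 2 + √(a * b) ^ 2)
      = (t ^ 2 + a ^ 2) * (t ^ 2 + b ^ 2) * ((t ^ 2 + a * b) / (4 * t ^ 2)) ^ 2 := by
    rw [sq_sqrt (by positivity)]
    field_simp
    ring
  rw [agmIntegrand, agmIntegrand, key, sqrt_mul (by positivity), sqrt_sq hc.le]
  field_simp
  ring

lemma agmIntegral_agm_step (ha : 0 < a) (hb : 0 < b) :
    agmIntegral ((a + b) / 2) √(a * b) = agmIntegral a b := by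
  have hsubst := integral_image_eq_integral_abs_deriv_smul measurableSet_Ioi
    (fun t ht => (hasDerivAt_sub_div (a * b) (ne_of_gt ht)).hasDerivWithinAt)
    (strictMonoOn_sub_div (by positivity)).injOn (agmIntegrand ((a + b) / 2) √(a * b))
  rw [image_sub_div_Ioi (by positivity), setIntegral_univ, integral_agmIntegrand,
    setIntegral_congr_fun measurableSet_Ioi fun t (ht : 0 < t) => by
      rw [abs_of_pos (by positivity), smul_eq_mul, agmIntegrand_agm_step ha hb ht],
    integral_const_mul, ← agmIntegral] at hsubst
  linarith

lemma agmIntegral_eq_mul_hyp2F1 (hb : 0 < b) (hba : b ≤ a) :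
    agmIntegral a b = π / (2 * a) * hyp2F1 (1 / 2) (1 / 2) 1 (1 - (b / a) ^ 2) := by
  have ha : 0 < a := hb.trans_le hba
  have hm : |1 - (b / a) ^ 2| < 1 := by
    have : b / a ≤ 1 := (div_le_one ha).mpr hba
    rw [abs_lt]
    constructor <;> nlinarith [div_pos hb ha]
  have hfactor (θ : ℝ) : 1 / √(a ^ 2 * cos θ ^ 2 + b ^ 2 * sin θ ^ 2)
      = a⁻¹ * (1 / √(1 - (1 - (b / a) ^ 2) * sin θ ^ 2)) := by
    have : a ^ 2 * cos θ ^ 2 + b ^ 2 * sin θ ^ 2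
        = a ^ 2 * (1 - (1 - (b / a) ^ 2) * sin θ ^ 2) := by
      field_simp
      linear_combination a ^ 2 * cos_sq_add_sin_sq θ
    rw [this, sqrt_mul (sq_nonneg a), sqrt_sq ha.le]
    field_simp
  simp_rw [agmIntegral_eq_integral_cos_sin hb, hfactor, intervalIntegral.integral_const_mul,
    integral_inv_sqrt_one_sub_mul_sin_sq hm]
  field_simp

lemma agmIntegral_mem_Icc (hb : 0 < b) (hba : b ≤ a) :
    agmIntegral a b ∈ Icc (π / (2 * a)) (π / (2 * b)) := by
  have ha : 0 < a := hb.trans_le hba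
  have hm0 : 0 ≤ 1 - (b / a) ^ 2 := by
    rw [sub_nonneg]
    exact pow_le_one₀ (by positivity) ((div_le_one ha).mpr hba)
  obtain ⟨hlow, hupp⟩ := hyp2F1_half_half_one_mem_Icc hm0 (by have := div_pos hb ha; nlinarith)
  rw [sub_sub_cancel, sqrt_sq (by positivity)] at hupp
  rw [agmIntegral_eq_mul_hyp2F1 hb hba]
  constructor
  · calc π / (2 * a) = π / (2 * a) * 1 := (mul_one _).symm
      _ ≤ _ := by gcongr
  · calc π / (2 * a) * hyp2F1 (1 / 2) (1 / 2) 1 (1 - (b / a) ^ 2)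
        ≤ π / (2 * a) * (1 / (b / a)) := by gcongr
      _ = π / (2 * b) := by field_simp

end AgmIntegral

lemma agmSeq_mem_Icc {α β : ℝ} (hβ : 0 ≤ β) (hβα : β ≤ α) (n : ℕ) :
    β ≤ (agmSeq α β n).2 ∧ (agmSeq α β n).2 ≤ (agmSeq α β n).1 := by
  induction n with
  | zero => exact ⟨le_rfl, hβα⟩
  | succ n ih =>
    obtain ⟨hβb, hba⟩ := ih
    simp only [agmSeq]
    set a := (agmSeq α β n).1
    set b := (agmSeq α β n).2
    have hb : 0 ≤ b := hβ.trans hβb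
    refine ⟨hβb.trans ((le_sqrt hb (mul_nonneg (hb.trans hba) hb)).mpr (by nlinarith)),
      sqrt_le_iff.mpr ⟨by linarith, by nlinarith [sq_nonneg (a - b)]⟩⟩

lemma agmIntegral_agmSeq {α β : ℝ} (hβ : 0 < β) (hβα : β ≤ α) (n : ℕ) :
    agmIntegral (agmSeq α β n).1 (agmSeq α β n).2 = agmIntegral α β := by
  induction n with
  | zero => rfl
  | succ n ih =>
    obtain ⟨hβb, hba⟩ := agmSeq_mem_Icc hβ.le hβα n
    have hb := hβ.trans_le hβb
    exact (agmIntegral_agm_step (hb.trans_le hba) hb).trans ih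

/-- For `α ≥ β > 0`, the common limit `AGM(α,β)` of the AGM sequences satisfies
`AGM(α, β) = α / ₂F₁(1/2, 1/2; 1; 1 − (β/α)²)`. -/
theorem agm_eq_hyp2F1 (α β L : ℝ) (hβ : 0 < β) (hβα : β ≤ α)
    (h1 : Tendsto (fun n => (agmSeq α β n).1) atTop (nhds L))
    (h2 : Tendsto (fun n => (agmSeq α β n).2) atTop (nhds L)) :
    L = α / hyp2F1 (1 / 2) (1 / 2) 1 (1 - (β / α) ^ 2) := by
  have hbounds (n : ℕ) :
      agmIntegral α β ∈ Icc (π / (2 * (agmSeq α β n).1)) (π / (2 * (agmSeq α β n).2)) := by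
    obtain ⟨hβb, hba⟩ := agmSeq_mem_Icc hβ.le hβα n
    exact agmIntegral_agmSeq hβ hβα n ▸ agmIntegral_mem_Icc (hβ.trans_le hβb) hba
  have hL : 0 < L := hβ.trans_le (ge_of_tendsto' h2 fun n => (agmSeq_mem_Icc hβ.le hβα n).1)
  have hlim {u : ℕ → ℝ} (hu : Tendsto u atTop (nhds L)) :
      Tendsto (fun n => π / (2 * u n)) atTop (nhds (π / (2 * L))) :=
    tendsto_const_nhds.div (hu.const_mul 2) (by positivity)
  have hI : agmIntegral α β = π / (2 * L) :=
    le_antisymm (ge_of_tendsto' (hlim h2) fun n => (hbounds n).2)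
      (le_of_tendsto' (hlim h1) fun n => (hbounds n).1)
  rw [agmIntegral_eq_mul_hyp2F1 hβ hβα] at hI
  have hα : 0 < α := hβ.trans_le hβα
  have hF : hyp2F1 (1 / 2) (1 / 2) 1 (1 - (β / α) ^ 2) = α / L := by
    field_simp at hI ⊢
    linarith
  rw [hF, div_div_cancel₀ hα.ne']
end
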